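/- For every δ > 0 there exists a bit-prediction strategy P such that Succ^bp(P, A_{ws} ∪ A_{co-ws}) > 1 − δ, and moreover P has the safety property that for every x ∈ {0,1}^ω the probability that P outputs an incorrect prediction, namely Σ_{i ∈ ℕ} π_{P,x}((i, 1 − x_i)), is at most δ. -/

import Mathlib

/-- A bit-prediction strategy: for each sequence `x` (0-indexed: `x i` is bit `x_{i+1}`),
a probability distribution on `(ℕ × {0,1}) ∪ {∞}`, where `some (i, z)` means
"after seeing `x_1, …, x_{i}` (indices `< i`), predict that bit `x_{i+1}` equals `z`",
and `none` means "never predict".  The prediction at position `i` may depend only on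
the first `i` bits. -/
structure BitPredStrategy where
  prob : (ℕ → Bool) → Option (ℕ × Bool) → ℝ
  nonneg : ∀ x o, 0 ≤ prob x o
  total : ∀ x, ∑' o : Option (ℕ × Bool), prob x o = 1
  adapted : ∀ x x' : ℕ → Bool, ∀ i : ℕ, ∀ z : Bool,
    (∀ j, j < i → x j = x' j) → prob x (some (i, z)) = prob x' (some (i, z))

/-- Success probability of a bit-prediction strategy: the probability of predicting
some bit of `x` correctly. -/
noncomputable def succBP (S : BitPredStrategy) (x : ℕ → Bool) : ℝ :=
  ∑' i : ℕ, S.prob x (some (i, x i))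

/-- `cars x t` is `N_t(x) = x_1 + ⋯ + x_t`. -/
def cars (x : ℕ → Bool) (t : ℕ) : ℕ :=
  ((Finset.range t).filter (fun i => x i = true)).card

/-- `x` is weakly sparse if `lim_{s→∞} inf_{t ≥ s} N_t(x)/t = 0`. -/
def weaklySparse (x : ℕ → Bool) : Prop :=
  Filter.liminf (fun t : ℕ => (cars x t : ℝ) / t) Filter.atTop = 0

/-!
For each bit `z` the strategy keeps an error budget `budget z` (initially `r`) and the
probability `mass` not yet spent (initially `1`). At time `t` it predicts `x t = z` with
probability `damp γ σ * budget z * mass / 2`, where `γ = 1 + r / 8`, `damp γ σ = γ ^ min σ 0`,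
and the slack `σ = t - M - (M + 1) · #{i < t | x i ≠ z}` is nonnegative when the mismatches with
`z` have been rare so far. A wrong prediction of `z` is paid from `budget z`, so at most `2r` is
ever spent on errors.

The energy `budget z * mass * potential γ σ` drops by twice the error paid at a mismatch and
grows by at most `r / 2` times the probability spent on `z` otherwise; since it starts below
`r / 2`, the budget `budget z` never falls below `r / 2`. When the mismatches with `z` are weakly
sparse, `σ ≥ 0` infinitely often, and each such step spends a fraction `r / 4` of `mass` on
predicting `z`. Hence `mass → 0`, and everything except the at most `2r` spent on errors goes
into correct predictions.
-/

open Filter Topology Finset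

lemma hasSum_option_elim {α M : Type*} [AddCommMonoid M] [TopologicalSpace M]
    [ContinuousAdd M] {f : α → M} {a : M} (b : M) (hf : HasSum f a) :
    HasSum (fun o : Option α => o.elim b f) (b + a) := by
  have hsome : HasSum (fun o : Option α => o.elim 0 f) a := by
    refine ((Option.some_injective α).hasSum_iff ?_).mp hf
    rintro (_ | p) h
    · rfl
    · exact absurd ⟨p, rfl⟩ h
  convert (hasSum_ite_eq none b).add hsome using 1
  funext o
  cases o <;> simp

lemma tendsto_zero_of_antitone_of_frequently_le_mul {u : ℕ → ℝ} {q : ℝ} (hu : Antitone u)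
    (hu0 : ∀ t, 0 ≤ u t) (hq : q < 1) (hdrop : ∃ᶠ t in atTop, u (t + 1) ≤ q * u t) :
    Tendsto u atTop (𝓝 0) := by
  have hlim := tendsto_atTop_ciInf hu ⟨0, Set.forall_mem_range.mpr hu0⟩
  set L := ⨅ t, u t
  have hL0 : 0 ≤ L := ge_of_tendsto' hlim hu0
  have hLq : L - q * L ≤ 0 :=
    le_of_tendsto_of_frequently ((hlim.comp (tendsto_add_atTop_nat 1)).sub (hlim.const_mul q))
      (hdrop.mono fun t ht => by simpa using ht)
  rwa [show L = 0 by nlinarith] at hlim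

section Sparse

variable {x x' : ℕ → Bool}

lemma cars_zero (x : ℕ → Bool) : cars x 0 = 0 := rfl

lemma cars_succ (x : ℕ → Bool) (t : ℕ) : cars x (t + 1) = cars x t + if x t then 1 else 0 := by
  by_cases h : x t <;> simp [cars, Finset.range_add_one, Finset.filter_insert, h]

lemma cars_le (x : ℕ → Bool) (t : ℕ) : cars x t ≤ t :=
  (card_filter_le _ _).trans (card_range t).le

lemma cars_congr {t : ℕ} (h : ∀ j < t, x j = x' j) : cars x t = cars x' t := by
  unfold cars
  congr 1
  exact filter_congr fun i hi => by rw [h i (mem_range.mp hi)]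

lemma weaklySparse.frequently_mul_cars_add_le (hx : weaklySparse x) (a b : ℕ) :
    ∃ᶠ t in atTop, a * cars x t + b ≤ t := by
  have hbdd : IsCoboundedUnder (· ≥ ·) atTop fun t : ℕ => (cars x t : ℝ) / t :=
    isCoboundedUnder_ge_of_le atTop (x := 1) fun t =>
      div_le_one_of_le₀ (by exact_mod_cast cars_le x t) t.cast_nonneg
  have hfreq := frequently_lt_of_liminf_lt hbdd
    (by rw [hx]; positivity : liminf (fun t : ℕ => (cars x t : ℝ) / t) atTop < 1 / (2 * a + 1))
  refine (hfreq.and_eventually (eventually_ge_atTop (2 * b + 1))).mono fun t ⟨hlt, ht⟩ => ?_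
  have ht' : (2 * b + 1 : ℝ) ≤ t := by exact_mod_cast ht
  rw [div_lt_div_iff₀ (by linarith) (by positivity)] at hlt
  have hcars : (0 : ℝ) ≤ cars x t := (cars x t).cast_nonneg
  have : (a * cars x t + b : ℝ) ≤ t := by nlinarith
  exact_mod_cast this

end Sparse

namespace BitPredStrategy

noncomputable def ofWeights (w : (ℕ → Bool) → ℕ × Bool → ℝ) (nonneg : ∀ x p, 0 ≤ w x p)
    (sum_le_one : ∀ x (u : Finset (ℕ × Bool)), ∑ p ∈ u, w x p ≤ 1)
    (adapted : ∀ x x' i z, (∀ j < i, x j = x' j) → w x (i, z) = w x' (i, z)) :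
    BitPredStrategy where
  prob x o := o.elim (1 - ∑' p, w x p) (w x)
  nonneg x o := by
    have hsum := summable_of_sum_le (nonneg x) (sum_le_one x)
    rcases o with _ | p
    · exact sub_nonneg.mpr (hsum.tsum_le_of_sum_le (sum_le_one x))
    · exact nonneg x p
  total x := by
    have hsum := summable_of_sum_le (nonneg x) (sum_le_one x)
    simpa using (hasSum_option_elim (1 - ∑' p, w x p) hsum.hasSum).tsum_eq
  adapted x x' i z h := adapted x x' i z h

end BitPredStrategy

namespace CautiousPredictor

noncomputable section Potential

variable {γ : ℝ} {s : ℤ}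

def damp (γ : ℝ) (s : ℤ) : ℝ := γ ^ min s 0

def potential (γ : ℝ) (s : ℤ) : ℝ := 2 * damp γ s + 2 * (γ - 1) * max s 0

lemma damp_pos (hγ : 0 < γ) (s : ℤ) : 0 < damp γ s := zpow_pos hγ _

lemma damp_le_one (hγ : 1 ≤ γ) (s : ℤ) : damp γ s ≤ 1 :=
  zpow_le_one_of_nonpos₀ hγ (min_le_right s 0)

lemma damp_of_nonneg (hs : 0 ≤ s) : damp γ s = 1 := by
  rw [damp, min_eq_right hs, zpow_zero]

lemma damp_le_pow_mul_damp_sub (hγ : 1 ≤ γ) (s : ℤ) (n : ℕ) :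
    damp γ s ≤ γ ^ n * damp γ (s - n) := by
  rw [damp, damp, ← zpow_natCast, ← zpow_add₀ (by positivity)]
  exact zpow_le_zpow_right₀ hγ (by omega)

lemma potential_nonneg (hγ : 1 ≤ γ) (s : ℤ) : 0 ≤ potential γ s := by
  have := damp_pos (by linarith : (0 : ℝ) < γ) s
  have : (0 : ℝ) ≤ max s 0 := by exact_mod_cast le_max_right s 0
  unfold potential
  nlinarith

lemma potential_add_one (hγ : 0 < γ) (s : ℤ) :
    potential γ (s + 1) = potential γ s + 2 * (γ - 1) * damp γ s := by
  rcases le_or_gt s (-1) with hs | hs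
  · rw [potential, potential, damp, damp, min_eq_left (by omega), min_eq_left (by omega),
      max_eq_right (by omega), max_eq_right (by omega), zpow_add_one₀ hγ.ne']
    push_cast
    ring
  · rw [potential, potential, damp_of_nonneg (by omega), damp_of_nonneg (by omega),
      max_eq_left (by omega), max_eq_left (by omega)]
    push_cast
    ring

lemma two_mul_pow_sub_one_mul_damp_le (hγ : 1 ≤ γ) (s : ℤ) (n : ℕ) :
    2 * (γ ^ n - 1) * damp γ s ≤ γ ^ n * (potential γ s - potential γ (s - n)) := by
  induction n with
  | zero => simp
  | succ n ih =>
    have hstep := potential_add_one (by linarith : (0 : ℝ) < γ) (s - (n + 1 : ℕ))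
    rw [show s - ((n + 1 : ℕ) : ℤ) + 1 = s - n by push_cast; ring] at hstep
    have hdamp := damp_le_pow_mul_damp_sub hγ s (n + 1)
    rw [pow_succ] at hdamp ⊢
    rw [show potential γ (s - (n + 1 : ℕ)) = potential γ (s - n) - 2 * (γ - 1) *
      damp γ (s - (n + 1 : ℕ)) by linarith]
    nlinarith [mul_le_mul_of_nonneg_left ih (by linarith : (0 : ℝ) ≤ γ),
      mul_le_mul_of_nonneg_left hdamp (by linarith : (0 : ℝ) ≤ 2 * (γ - 1))]

lemma potential_sub_le (hγ : 1 ≤ γ) {n : ℕ} (hn : 2 ≤ γ ^ n) (s : ℤ) :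
    potential γ (s - n) ≤ potential γ s - damp γ s := by
  have h := two_mul_pow_sub_one_mul_damp_le hγ s n
  have hD := damp_pos (by linarith : (0 : ℝ) < γ) s
  nlinarith

end Potential

noncomputable section

def slack (M : ℕ) (y : ℕ → Bool) (t : ℕ) : ℤ := t - (M + 1) * cars y t - M

structure State where
  budget : Bool → ℝ
  mass : ℝ

def state (r : ℝ) (M : ℕ) (x : ℕ → Bool) : ℕ → State
  | 0 => ⟨fun _ => r, 1⟩
  | t + 1 =>
    let s := state r M x t
    let w z := damp (1 + r / 8) (slack M (x · != z) t) * s.budget z * s.mass / 2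
    ⟨fun z => s.budget z - if x t = z then 0 else w z, s.mass - w false - w true⟩

def budget (r : ℝ) (M : ℕ) (x : ℕ → Bool) (z : Bool) (t : ℕ) : ℝ := (state r M x t).budget z

def mass (r : ℝ) (M : ℕ) (x : ℕ → Bool) (t : ℕ) : ℝ := (state r M x t).mass

def weight (r : ℝ) (M : ℕ) (x : ℕ → Bool) (z : Bool) (t : ℕ) : ℝ :=
  damp (1 + r / 8) (slack M (x · != z) t) * budget r M x z t * mass r M x t / 2

variable {r : ℝ} {M : ℕ} {x x' : ℕ → Bool} {z : Bool}

lemma budget_zero : budget r M x z 0 = r := rfl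

lemma mass_zero : mass r M x 0 = 1 := rfl

lemma budget_succ (t : ℕ) :
    budget r M x z (t + 1) = budget r M x z t - if x t = z then 0 else weight r M x z t := rfl

lemma mass_succ (t : ℕ) :
    mass r M x (t + 1) = mass r M x t - weight r M x false t - weight r M x true t := rfl

lemma slack_zero (y : ℕ → Bool) : slack M y 0 = -M := by
  simp [slack, cars_zero]

lemma slack_succ (y : ℕ → Bool) (t : ℕ) :
    slack M y (t + 1) = if y t then slack M y t - M else slack M y t + 1 := by
  rw [slack, slack, cars_succ]
  split_ifs <;> push_cast <;> ring

lemma slack_congr {y y' : ℕ → Bool} {t : ℕ} (h : ∀ j < t, y j = y' j) :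
    slack M y t = slack M y' t := by
  rw [slack, slack, cars_congr h]

lemma state_bounds (hr : 0 ≤ r) (hr1 : r ≤ 1) (t : ℕ) :
    (∀ z, 0 ≤ budget r M x z t ∧ budget r M x z t ≤ r) ∧ 0 ≤ mass r M x t ∧ mass r M x t ≤ 1 := by
  induction t with
  | zero => exact ⟨fun _ => ⟨hr, le_rfl⟩, zero_le_one, le_rfl⟩
  | succ t ih =>
    obtain ⟨hb, hm0, hm1⟩ := ih
    have hw : ∀ z, 0 ≤ weight r M x z t ∧ 2 * weight r M x z t ≤ budget r M x z t ∧
        2 * weight r M x z t ≤ r * mass r M x t := by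
      intro z
      obtain ⟨hb0, hb1⟩ := hb z
      have hd0 := (damp_pos (by linarith : (0 : ℝ) < 1 + r / 8) (slack M (x · != z) t)).le
      have hd1 := damp_le_one (by linarith : (1 : ℝ) ≤ 1 + r / 8) (slack M (x · != z) t)
      unfold weight
      refine ⟨by positivity, ?_, ?_⟩
      · nlinarith [mul_le_mul hd1 hm1 hm0 zero_le_one, mul_nonneg hd0 hm0]
      · nlinarith [mul_le_mul hd1 hb1 hb0 zero_le_one, mul_nonneg hd0 hb0]
    refine ⟨fun z => ?_, ?_, ?_⟩
    · obtain ⟨hw0, hwb, -⟩ := hw z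
      obtain ⟨hb0, hb1⟩ := hb z
      rw [budget_succ]
      split_ifs <;> constructor <;> linarith
    · obtain ⟨-, -, hf⟩ := hw false
      obtain ⟨-, -, ht⟩ := hw true
      rw [mass_succ]
      nlinarith
    · obtain ⟨hf, -, -⟩ := hw false
      obtain ⟨ht, -, -⟩ := hw true
      rw [mass_succ]
      linarith

lemma budget_nonneg (hr : 0 ≤ r) (hr1 : r ≤ 1) (z : Bool) (t : ℕ) : 0 ≤ budget r M x z t :=
  ((state_bounds hr hr1 t).1 z).1

lemma budget_le (hr : 0 ≤ r) (hr1 : r ≤ 1) (z : Bool) (t : ℕ) : budget r M x z t ≤ r :=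
  ((state_bounds hr hr1 t).1 z).2

lemma mass_nonneg (hr : 0 ≤ r) (hr1 : r ≤ 1) (t : ℕ) : 0 ≤ mass r M x t :=
  (state_bounds hr hr1 t).2.1

lemma weight_nonneg (hr : 0 ≤ r) (hr1 : r ≤ 1) (z : Bool) (t : ℕ) : 0 ≤ weight r M x z t := by
  have := damp_pos (by linarith : (0 : ℝ) < 1 + r / 8) (slack M (x · != z) t)
  have := budget_nonneg (M := M) (x := x) hr hr1 z t
  have := mass_nonneg (M := M) (x := x) hr hr1 t
  unfold weight
  positivity

lemma mass_succ_le_sub_weight (hr : 0 ≤ r) (hr1 : r ≤ 1) (z : Bool) (t : ℕ) :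
    mass r M x (t + 1) ≤ mass r M x t - weight r M x z t := by
  have := weight_nonneg (M := M) (x := x) hr hr1 (!z) t
  rw [mass_succ]
  cases z <;> simp_all

lemma mass_antitone (hr : 0 ≤ r) (hr1 : r ≤ 1) : Antitone (mass r M x) :=
  antitone_nat_of_succ_le fun t =>
    (mass_succ_le_sub_weight hr hr1 false t).trans
      (by linarith [weight_nonneg (M := M) (x := x) hr hr1 false t])

lemma sum_range_weight_add (T : ℕ) :
    ∑ t ∈ range T, (weight r M x false t + weight r M x true t) = 1 - mass r M x T := by
  rw [← mass_zero (r := r) (M := M) (x := x), ← sum_range_sub' (mass r M x)]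
  exact sum_congr rfl fun t _ => by rw [mass_succ]; ring

lemma sum_range_ite_weight (z : Bool) (T : ℕ) :
    ∑ t ∈ range T, (if x t = z then 0 else weight r M x z t) = r - budget r M x z T := by
  have htele := sum_range_sub' (budget r M x z) T
  rw [budget_zero] at htele
  rw [← htele]
  exact sum_congr rfl fun t _ => by rw [budget_succ]; ring

lemma sum_range_weight_not (T : ℕ) :
    ∑ t ∈ range T, weight r M x (!x t) t =
      (r - budget r M x false T) + (r - budget r M x true T) := by
  rw [← sum_range_ite_weight, ← sum_range_ite_weight, ← sum_add_distrib]
  exact sum_congr rfl fun t _ => by cases x t <;> simp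

lemma sum_range_weight_le_one (hr : 0 ≤ r) (hr1 : r ≤ 1) (z : Bool) (T : ℕ) :
    ∑ t ∈ range T, weight r M x z t ≤ 1 := by
  calc ∑ t ∈ range T, weight r M x z t
      ≤ ∑ t ∈ range T, (weight r M x false t + weight r M x true t) :=
        sum_le_sum fun t _ => by
          cases z <;> simp [weight_nonneg (M := M) (x := x) hr hr1 _ t]
    _ = 1 - mass r M x T := sum_range_weight_add T
    _ ≤ 1 := by linarith [mass_nonneg (M := M) (x := x) hr hr1 T]

lemma sum_weight_le_one (hr : 0 ≤ r) (hr1 : r ≤ 1) (u : Finset (ℕ × Bool)) :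
    ∑ p ∈ u, weight r M x p.2 p.1 ≤ 1 := by
  set T := u.sup Prod.fst + 1
  have hu : u ⊆ range T ×ˢ univ := fun p hp =>
    mem_product.mpr ⟨mem_range.mpr (Nat.lt_succ_of_le (le_sup (f := Prod.fst) hp)), mem_univ _⟩
  calc ∑ p ∈ u, weight r M x p.2 p.1
      ≤ ∑ p ∈ range T ×ˢ univ, weight r M x p.2 p.1 :=
        sum_le_sum_of_subset_of_nonneg hu fun p _ _ => weight_nonneg hr hr1 _ _
    _ = ∑ t ∈ range T, (weight r M x false t + weight r M x true t) := by
        simp only [sum_product, Fintype.sum_bool, add_comm]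
    _ ≤ 1 := by linarith [sum_range_weight_add (r := r) (M := M) (x := x) T,
        mass_nonneg (M := M) (x := x) hr hr1 T]

lemma tsum_weight_not_le (hr : 0 ≤ r) (hr1 : r ≤ 1) (x : ℕ → Bool) :
    ∑' t, weight r M x (!x t) t ≤ 2 * r :=
  Real.tsum_le_of_sum_range_le (fun t => weight_nonneg hr hr1 _ t) fun T => by
    rw [sum_range_weight_not]
    linarith [budget_nonneg (M := M) (x := x) hr hr1 false T,
      budget_nonneg (M := M) (x := x) hr hr1 true T]

lemma state_congr {t : ℕ} (h : ∀ j < t, x j = x' j) : state r M x t = state r M x' t := by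
  induction t with
  | zero => rfl
  | succ t ih =>
    have hlt : ∀ j < t, x j = x' j := fun j hj => h j (by omega)
    have hslack : ∀ z, slack M (x · != z) t = slack M (x' · != z) t := fun z =>
      slack_congr fun j hj => by rw [hlt j hj]
    simp only [state, ih hlt, hslack, h t (by omega)]

lemma weight_congr {t : ℕ} (h : ∀ j < t, x j = x' j) : weight r M x z t = weight r M x' z t := by
  rw [weight, weight, budget, budget, mass, mass, state_congr h,
    slack_congr fun j hj => by rw [h j hj]]

def energy (r : ℝ) (M : ℕ) (x : ℕ → Bool) (z : Bool) (t : ℕ) : ℝ :=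
  budget r M x z t * mass r M x t * potential (1 + r / 8) (slack M (x · != z) t)

lemma energy_succ_add_le (hr : 0 ≤ r) (hr1 : r ≤ 1) (hM : 2 ≤ (1 + r / 8) ^ M) (z : Bool)
    (t : ℕ) : energy r M x z (t + 1) + 2 * (if x t = z then 0 else weight r M x z t) ≤
      energy r M x z t + r / 2 * weight r M x z t := by
  have hγ : (1 : ℝ) ≤ 1 + r / 8 := by linarith
  have hB := budget_nonneg (M := M) (x := x) hr hr1 z t
  have hS := mass_nonneg (M := M) (x := x) hr hr1 t
  have hS' := mass_nonneg (M := M) (x := x) hr hr1 (t + 1)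
  have hSS : mass r M x (t + 1) ≤ mass r M x t := by
    linarith [mass_succ_le_sub_weight (M := M) (x := x) hr hr1 z t,
      weight_nonneg (M := M) (x := x) hr hr1 z t]
  have hBS : budget r M x z (t + 1) * mass r M x (t + 1) ≤ budget r M x z t * mass r M x t := by
    refine mul_le_mul ?_ hSS hS' hB
    rw [budget_succ]
    split_ifs <;> linarith [weight_nonneg (M := M) (x := x) hr hr1 z t]
  have hP := potential_nonneg hγ (slack M (x · != z) (t + 1))
  have hslack := slack_succ (M := M) (x · != z) t
  unfold energy
  by_cases hxt : x t = z
  · simp only [hxt, bne_self_eq_false, Bool.false_eq_true, if_true, if_false] at hslack ⊢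
    rw [hslack, potential_add_one (by linarith : (0 : ℝ) < 1 + r / 8)] at hP ⊢
    have := mul_le_mul_of_nonneg_right hBS hP
    unfold weight
    nlinarith
  · have hne : (x t != z) = true := bne_iff_ne.mpr hxt
    simp only [hne, hxt, if_true, if_false] at hslack ⊢
    rw [hslack] at hP ⊢
    have := mul_le_mul_of_nonneg_right hBS hP
    have hdrop := potential_sub_le hγ hM (slack M (x · != z) t)
    have := mul_le_mul_of_nonneg_left hdrop (mul_nonneg hB hS)
    have := weight_nonneg (M := M) (x := x) hr hr1 z t
    unfold weight at *
    nlinarith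

lemma energy_zero_le (hr : 0 ≤ r) (hM : 4 ≤ (1 + r / 8) ^ M) : energy r M x z 0 ≤ r / 2 := by
  have hpot : potential (1 + r / 8) (-M) = 2 * ((1 + r / 8) ^ M)⁻¹ := by
    rw [potential, damp, min_eq_left (by omega), max_eq_right (by omega), zpow_neg, zpow_natCast]
    push_cast
    ring
  have hinv : ((1 + r / 8) ^ M)⁻¹ ≤ 4⁻¹ := inv_anti₀ (by norm_num) hM
  rw [energy, budget_zero, mass_zero, slack_zero, hpot]
  nlinarith

lemma half_le_budget (hr : 0 ≤ r) (hr1 : r ≤ 1) (hM : 4 ≤ (1 + r / 8) ^ M) (z : Bool) (T : ℕ) :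
    r / 2 ≤ budget r M x z T := by
  have htele : ∀ T, energy r M x z T + 2 * (r - budget r M x z T) ≤
      energy r M x z 0 + r / 2 * ∑ t ∈ range T, weight r M x z t := by
    intro T
    induction T with
    | zero => simp [budget_zero]
    | succ T ih =>
      have := energy_succ_add_le (x := x) hr hr1 (hM.trans' (by norm_num)) z T
      rw [sum_range_succ, budget_succ]
      linarith
  have henergy : 0 ≤ energy r M x z T := by
    have := budget_nonneg (M := M) (x := x) hr hr1 z T
    have := mass_nonneg (M := M) (x := x) hr hr1 T
    have := potential_nonneg (by linarith : (1 : ℝ) ≤ 1 + r / 8) (slack M (x · != z) T)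
    unfold energy
    positivity
  have hspent : r / 2 * ∑ t ∈ range T, weight r M x z t ≤ r / 2 :=
    mul_le_of_le_one_right (by linarith) (sum_range_weight_le_one hr hr1 z T)
  linarith [htele T, energy_zero_le (x := x) (z := z) hr hM]

lemma mass_succ_le_of_slack_nonneg (hr : 0 ≤ r) (hr1 : r ≤ 1) (hM : 4 ≤ (1 + r / 8) ^ M)
    {t : ℕ} (h : 0 ≤ slack M (x · != z) t) : mass r M x (t + 1) ≤ (1 - r / 4) * mass r M x t := by
  have hB := half_le_budget (x := x) hr hr1 hM z t
  have hS := mass_nonneg (M := M) (x := x) hr hr1 t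
  have hw : r / 4 * mass r M x t ≤ weight r M x z t := by
    rw [weight, damp_of_nonneg h]
    nlinarith
  linarith [mass_succ_le_sub_weight (M := M) (x := x) hr hr1 z t]

lemma tendsto_mass_atTop (hr : 0 < r) (hr1 : r ≤ 1) (hM : 4 ≤ (1 + r / 8) ^ M)
    (hx : weaklySparse (x · != z)) : Tendsto (mass r M x) atTop (𝓝 0) := by
  refine tendsto_zero_of_antitone_of_frequently_le_mul (mass_antitone hr.le hr1)
    (mass_nonneg hr.le hr1) (by linarith : 1 - r / 4 < 1)
    ((hx.frequently_mul_cars_add_le (M + 1) M).mono fun t ht => ?_)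
  refine mass_succ_le_of_slack_nonneg (z := z) hr.le hr1 hM ?_
  have : (((M + 1) * cars (x · != z) t + M : ℕ) : ℤ) ≤ t := by exact_mod_cast ht
  rw [slack]
  push_cast at this
  linarith

lemma one_sub_two_mul_le_tsum_weight_self (hr : 0 < r) (hr1 : r ≤ 1)
    (hM : 4 ≤ (1 + r / 8) ^ M) (hx : weaklySparse (x · != z)) :
    1 - 2 * r ≤ ∑' t, weight r M x (x t) t := by
  have hsplit : ∀ T, ∑ t ∈ range T, weight r M x (x t) t =
      1 - mass r M x T - ((r - budget r M x false T) + (r - budget r M x true T)) := by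
    intro T
    rw [← sum_range_weight_add, ← sum_range_weight_not, ← sum_sub_distrib]
    exact sum_congr rfl fun t _ => by cases x t <;> simp
  have hB := fun z T => budget_nonneg (M := M) (x := x) hr.le hr1 z T
  have hB' := fun z T => budget_le (M := M) (x := x) hr.le hr1 z T
  have hS := mass_nonneg (M := M) (x := x) hr.le hr1
  have hsum : Summable fun t => weight r M x (x t) t :=
    summable_of_sum_range_le (fun t => weight_nonneg hr.le hr1 _ t) fun T => by
      rw [hsplit]
      linarith [hS T, hB' false T, hB' true T]
  have hlim : Tendsto (fun T => 1 - 2 * r - mass r M x T) atTop (𝓝 (1 - 2 * r)) := by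
    simpa using (tendsto_mass_atTop hr hr1 hM hx).const_sub (1 - 2 * r)
  refine le_of_tendsto_of_tendsto' hlim hsum.hasSum.tendsto_sum_nat fun T => ?_
  rw [hsplit]
  linarith [hB false T, hB true T]

def strategy (M : ℕ) (hr : 0 ≤ r) (hr1 : r ≤ 1) : BitPredStrategy :=
  .ofWeights (fun x p => weight r M x p.2 p.1) (fun _ _ => weight_nonneg hr hr1 _ _)
    (fun _ => sum_weight_le_one hr hr1) fun _ _ _ _ h => weight_congr h

end

end CautiousPredictor

open CautiousPredictor in
/-- Lemma 4.2: for every `δ > 0` there is a bit-prediction strategy `P` with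
`Succ^bp(P, A_{ws} ∪ A_{co-ws}) > 1 - δ`, which moreover on *every* sequence `x`
outputs an incorrect prediction with probability at most `δ`. -/
theorem bit_prediction_ws_cows (δ : ℝ) (hδ : 0 < δ) :
    ∃ P : BitPredStrategy,
      (∃ c : ℝ, 1 - δ < c ∧
        ∀ x : ℕ → Bool, (weaklySparse x ∨ weaklySparse (fun i => !x i)) →
          c ≤ succBP P x) ∧
      (∀ x : ℕ → Bool, ∑' i : ℕ, P.prob x (some (i, !x i)) ≤ δ) := by
  obtain ⟨r, hr, hr1, hrδ⟩ : ∃ r : ℝ, 0 < r ∧ r ≤ 1 ∧ 2 * r < δ :=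
    ⟨min δ 1 / 4, by positivity, by linarith [min_le_right δ 1],
      by linarith [min_le_left δ 1]⟩
  obtain ⟨M, hM⟩ := pow_unbounded_of_one_lt 4 (by linarith : (1 : ℝ) < 1 + r / 8)
  refine ⟨strategy M hr.le hr1, ⟨1 - 2 * r, by linarith, fun x hx => ?_⟩,
    fun x => (tsum_weight_not_le hr.le hr1 x).trans hrδ.le⟩
  rcases hx with hx | hx
  · exact one_sub_two_mul_le_tsum_weight_self (z := false) hr hr1 hM.le (by simpa using hx)
  · exact one_sub_two_mul_le_tsum_weight_self (z := true) hr hr1 hM.le (by simpa using hx)
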